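/- Let κ > 0 be a killing rate with κ^{−1} > e^{30}, let 0 < ε < 1, let m ≥ 2 be a real number, and set u* := (log m)/(log G^{o,o}). Then for every x ∈ ℤ² with |x| ≥ 2κ^{−1}, ((G^{o,o})² − (G^{o,x})²)^{−(1−ε)u*} ≤ m^{−(1−ε)} · ((log κ^{−1})/(2π))^{−(1−ε)u*}. -/

import Mathlib

/-!
In the coordinates `(x₁ + x₂, x₁ - x₂)` a nearest-neighbour walk on `ℤ²` is a pair of independent
`±1` walks on `ℤ`, so `W n x` is a product of two binomial coefficients. At the origin this gives
`W (2j) o = (centralBinom j)² ≥ 16ʲ / (4j)`; summing over `j ≤ κ⁻¹ / 20`, where the killing is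
still negligible, yields `G^{o,o} ≥ (39/160) log (κ⁻¹ / 20)`, which exceeds `log κ⁻¹ / (2π) + 1`
once `log κ⁻¹ > 30`. Far from the origin an exponential tilt (a Chernoff bound) gives
`(4 + κ)⁻ⁿ W_n^{o,x} ≤ e^{-t|x|} ρⁿ` with `t = √κ / 4` and `1 - ρ ≥ κ / 10`, hence `G^{o,x} ≤ 1`
when `|x| ≥ 2κ⁻¹`. Then `(G^{o,o})² - (G^{o,x})² ≥ G^{o,o} · log κ⁻¹ / (2π)`, and since
`m^{-(1-ε)} = (G^{o,o})^{-(1-ε)u*}` the claim follows from the antitonicity of `y ↦ y^{-(1-ε)u*}`.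
-/

open scoped Real

/-- Graph (L¹) distance of `x ∈ ℤ²` from the origin: `|x₁| + |x₂|`. -/
def gnorm (x : ℤ × ℤ) : ℕ := x.1.natAbs + x.2.natAbs

/-- `W n x` is the number of nearest-neighbour walks of length `n` in `ℤ²`
from the origin `o = (0,0)` to `x`, i.e. the number of sequences
`(v₀, …, v_n)` with `v₀ = o`, `v_n = x` and `|v_{i+1} − v_i| = 1` for all `i`. -/
noncomputable def W (n : ℕ) (x : ℤ × ℤ) : ℕ :=
  Set.ncard {v : Fin (n + 1) → ℤ × ℤ |
    v 0 = (0, 0) ∧ v (Fin.last n) = x ∧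
    ∀ i : Fin n, gnorm (v i.succ - v i.castSucc) = 1}

/-- The Green's function `G^{o,x}` of the simple random walk on `ℤ²` with
killing rate `κ`: `G κ x = Σ_{n≥0} (4+κ)^{-n} W_n^{o,x}`. -/
noncomputable def G (κ : ℝ) (x : ℤ × ℤ) : ℝ :=
  ∑' n : ℕ, (1 / (4 + κ)) ^ n * (W n x : ℝ)

open Finset

/-- An `n`-step `±1` walk on `ℤ` is encoded by its set `T` of up-steps; it ends at `2 #T - n`. -/
def pathCount (n : ℕ) (p : ℤ) : ℕ := #{T : Finset (Fin n) | 2 * (#T : ℤ) - n = p}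

lemma pathCount_eq_choose {n m : ℕ} {p : ℤ} (h : n + p = 2 * m) :
    pathCount n p = n.choose m := by
  have : ∀ T : Finset (Fin n), 2 * (#T : ℤ) - n = p ↔ #T = m := fun T => by omega
  simp only [pathCount, this]
  rw [← Fintype.card_subtype, Fintype.card_finset_len, Fintype.card_fin]

lemma pathCount_le (n : ℕ) (p : ℤ) : pathCount n p ≤ 2 ^ n := by
  calc pathCount n p ≤ #(univ : Finset (Finset (Fin n))) := card_filter_le _ _
    _ = 2 ^ n := by simp

lemma pathCount_mul_exp_le (n : ℕ) (p : ℤ) (t : ℝ) :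
    pathCount n p * Real.exp (t * p) ≤ (2 * Real.cosh t) ^ n := by
  have hterm : ∀ T : Finset (Fin n),
      Real.exp (t * (2 * #T - n)) = Real.exp t ^ #T * Real.exp (-t) ^ (n - #T) := by
    intro T
    have hT : #T ≤ n := by simpa using T.card_le_univ
    rw [← Real.exp_nat_mul, ← Real.exp_nat_mul, ← Real.exp_add, Nat.cast_sub hT]
    ring_nf
  calc (pathCount n p : ℝ) * Real.exp (t * p)
      = ∑ T with 2 * (#T : ℤ) - n = p, Real.exp (t * (2 * #T - n)) := by
        rw [pathCount, card_eq_sum_ones, Nat.cast_sum, sum_mul]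
        refine sum_congr rfl fun T hT => ?_
        rw [← (mem_filter.1 hT).2]; push_cast; ring
    _ ≤ ∑ T, Real.exp (t * (2 * #T - n)) :=
        sum_le_sum_of_subset_of_nonneg (filter_subset _ _) fun _ _ _ => (Real.exp_pos _).le
    _ = (2 * Real.cosh t) ^ n := by
        simp_rw [hterm, Fin.sum_pow_mul_eq_add_pow, Real.cosh_eq]; ring

lemma Fin.partialSum_last {M : Type*} [AddCommMonoid M] {n : ℕ} (f : Fin n → M) :
    Fin.partialSum f (Fin.last n) = ∑ i, f i := by
  rw [Fin.partialSum, Fin.val_last, List.take_of_length_le (by simp), List.sum_ofFn]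

lemma Fin.sum_succ_sub_castSucc {M : Type*} [AddCommGroup M] {n : ℕ} (v : Fin (n + 1) → M) :
    ∑ i : Fin n, (v i.succ - v i.castSucc) = v (Fin.last n) - v 0 := by
  rw [sum_sub_distrib, sub_eq_sub_iff_add_eq_add, add_comm, ← Fin.sum_univ_succ,
    Fin.sum_univ_castSucc, add_comm]

def walkEquivSteps (n : ℕ) (x : ℤ × ℤ) :
    {v : Fin (n + 1) → ℤ × ℤ // v 0 = (0, 0) ∧ v (Fin.last n) = x ∧
      ∀ i : Fin n, gnorm (v i.succ - v i.castSucc) = 1} ≃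
    {s : Fin n → ℤ × ℤ // (∀ i, gnorm (s i) = 1) ∧ ∑ i, s i = x} where
  toFun v := ⟨fun i => v.1 i.succ - v.1 i.castSucc, v.2.2.2, by
    rw [Fin.sum_succ_sub_castSucc, v.2.1, v.2.2.1, Prod.mk_zero_zero, sub_zero]⟩
  invFun s := ⟨Fin.partialSum s.1, Fin.partialSum_zero _, by rw [Fin.partialSum_last, s.2.2],
    fun i => by rw [Fin.partialSum_succ, add_sub_cancel_left]; exact s.2.1 i⟩
  left_inv v := by
    obtain ⟨v, hv0, -, -⟩ := v
    refine Subtype.ext ?_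
    have h := Fin.partialSum_left_neg v
    rw [hv0, Prod.mk_zero_zero, zero_vadd] at h
    simpa only [neg_add_eq_sub] using h
  right_inv s := Subtype.ext (funext fun i => by
    simp only [Fin.partialSum_succ, add_sub_cancel_left])

lemma sum_ite_mem_one_neg_one {n : ℕ} (T : Finset (Fin n)) :
    ∑ i, (if i ∈ T then (1 : ℤ) else -1) = 2 * #T - n := by
  have h := card_filter_add_card_filter_not (s := (univ : Finset (Fin n))) (· ∈ T)
  rw [sum_ite]
  simp only [subset_univ, filter_mem_eq_of_subset, card_univ, Fintype.card_fin, sum_const,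
    Int.nsmul_eq_mul, mul_one, Int.reduceNeg] at h ⊢
  omega

lemma sum_eq_two_mul_card_sub {n : ℕ} {f : Fin n → ℤ} (hf : ∀ i, f i = 1 ∨ f i = -1) :
    ∑ i, f i = 2 * #{i | f i = 1} - n := by
  rw [← sum_ite_mem_one_neg_one]
  refine sum_congr rfl fun i _ => ?_
  have := hf i
  simp only [mem_filter, mem_univ, true_and]
  split_ifs <;> omega

lemma gnorm_eq_one_iff {s : ℤ × ℤ} :
    gnorm s = 1 ↔ (s.1 + s.2 = 1 ∨ s.1 + s.2 = -1) ∧ (s.1 - s.2 = 1 ∨ s.1 - s.2 = -1) := by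
  simp only [gnorm]; omega

/-- The unit step `s` with `s.1 + s.2 = ±1` and `s.1 - s.2 = ±1`, the signs being given by
`p` and `q`. -/
def stepOfSigns (p q : Prop) [Decidable p] [Decidable q] : ℤ × ℤ :=
  (((if p then 1 else -1) + (if q then 1 else -1)) / 2,
    ((if p then 1 else -1) - (if q then 1 else -1)) / 2)

lemma stepOfSigns_spec (p q : Prop) [Decidable p] [Decidable q] :
    (stepOfSigns p q).1 + (stepOfSigns p q).2 = (if p then 1 else -1) ∧
      (stepOfSigns p q).1 - (stepOfSigns p q).2 = (if q then 1 else -1) := by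
  unfold stepOfSigns; split_ifs <;> omega

lemma gnorm_stepOfSigns (p q : Prop) [Decidable p] [Decidable q] :
    gnorm (stepOfSigns p q) = 1 := by
  unfold stepOfSigns gnorm; split_ifs <;> rfl

def stepsEquivUpSets (n : ℕ) (x : ℤ × ℤ) :
    {s : Fin n → ℤ × ℤ // (∀ i, gnorm (s i) = 1) ∧ ∑ i, s i = x} ≃
    {T : Finset (Fin n) // 2 * (#T : ℤ) - n = x.1 + x.2} ×
      {T : Finset (Fin n) // 2 * (#T : ℤ) - n = x.1 - x.2} where
  toFun s :=
    have hs i := gnorm_eq_one_iff.1 (s.2.1 i)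
    (⟨univ.filter fun i => (s.1 i).1 + (s.1 i).2 = 1, by
      rw [← sum_eq_two_mul_card_sub fun i => (hs i).1, sum_add_distrib, ← Prod.fst_sum,
        ← Prod.snd_sum, s.2.2]⟩,
    ⟨univ.filter fun i => (s.1 i).1 - (s.1 i).2 = 1, by
      rw [← sum_eq_two_mul_card_sub fun i => (hs i).2, sum_sub_distrib, ← Prod.fst_sum,
        ← Prod.snd_sum, s.2.2]⟩)
  invFun T := ⟨fun i => stepOfSigns (i ∈ T.1.1) (i ∈ T.2.1),
    fun i => gnorm_stepOfSigns _ _, by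
    obtain ⟨⟨T₁, h₁⟩, ⟨T₂, h₂⟩⟩ := T
    rw [← sum_ite_mem_one_neg_one] at h₁ h₂
    simp_rw [← fun i => (stepOfSigns_spec (i ∈ T₁) (i ∈ T₂)).1, sum_add_distrib] at h₁
    simp_rw [← fun i => (stepOfSigns_spec (i ∈ T₁) (i ∈ T₂)).2, sum_sub_distrib] at h₂
    ext <;> simp only [Prod.fst_sum, Prod.snd_sum] <;> omega⟩
  left_inv s := by
    obtain ⟨s, hs, -⟩ := s
    refine Subtype.ext (funext fun i => ?_)
    have := gnorm_eq_one_iff.1 (hs i)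
    simp only [stepOfSigns, mem_filter, mem_univ, true_and]
    ext <;> split_ifs <;> omega
  right_inv T := by
    obtain ⟨⟨T₁, -⟩, ⟨T₂, -⟩⟩ := T
    refine Prod.ext (Subtype.ext ?_) (Subtype.ext ?_) <;> ext i <;>
      simp only [mem_filter, mem_univ, true_and, (stepOfSigns_spec _ _).1,
        (stepOfSigns_spec _ _).2] <;> split_ifs <;> simp_all

lemma W_eq_pathCount_mul (n : ℕ) (x : ℤ × ℤ) :
    W n x = pathCount n (x.1 + x.2) * pathCount n (x.1 - x.2) := by
  rw [W, ← Nat.card_coe_set_eq]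
  refine (Nat.card_congr ((walkEquivSteps n x).trans (stepsEquivUpSets n x))).trans ?_
  simp only [Nat.card_eq_fintype_card, Fintype.card_prod, Fintype.card_subtype, pathCount]

lemma W_le_four_pow (n : ℕ) (x : ℤ × ℤ) : W n x ≤ 4 ^ n := by
  rw [W_eq_pathCount_mul, show 4 ^ n = 2 ^ n * 2 ^ n by rw [← mul_pow]; norm_num]
  exact Nat.mul_le_mul (pathCount_le _ _) (pathCount_le _ _)

lemma W_two_mul_zero (j : ℕ) : W (2 * j) (0, 0) = j.centralBinom ^ 2 := by
  rw [W_eq_pathCount_mul, add_zero, sub_zero, pathCount_eq_choose (m := j) (by push_cast; ring),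
    sq, Nat.centralBinom]

lemma pathCount_mul_exp_abs_le (n : ℕ) (p : ℤ) (t : ℝ) :
    pathCount n p * Real.exp (t * |p|) ≤ (2 * Real.cosh t) ^ n := by
  rcases abs_choice (p : ℝ) with h | h
  · simpa [h] using pathCount_mul_exp_le n p t
  · simpa [h] using pathCount_mul_exp_le n p (-t)

lemma W_mul_exp_le (n : ℕ) (x : ℤ × ℤ) {t : ℝ} (ht : 0 ≤ t) :
    W n x * Real.exp (t * gnorm x) ≤ ((2 * Real.cosh t) ^ 2) ^ n := by
  have hx : (gnorm x : ℤ) ≤ |x.1 + x.2| + |x.1 - x.2| := by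
    simp only [gnorm, Nat.cast_add, Int.natCast_natAbs, abs_eq_max_neg]; omega
  calc (W n x : ℝ) * Real.exp (t * gnorm x)
      ≤ (pathCount n (x.1 + x.2) * Real.exp (t * |(x.1 + x.2 : ℤ)|)) *
          (pathCount n (x.1 - x.2) * Real.exp (t * |(x.1 - x.2 : ℤ)|)) := by
        rw [W_eq_pathCount_mul, Nat.cast_mul, mul_mul_mul_comm, ← Real.exp_add, ← mul_add]
        gcongr
        exact_mod_cast hx
    _ ≤ (2 * Real.cosh t) ^ n * (2 * Real.cosh t) ^ n := by
        gcongr <;> exact pathCount_mul_exp_abs_le _ _ _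
    _ = ((2 * Real.cosh t) ^ 2) ^ n := by rw [← mul_pow, sq]

lemma sixteen_pow_le_mul_centralBinom_sq {n : ℕ} (hn : 0 < n) :
    16 ^ n ≤ 4 * n * n.centralBinom ^ 2 := by
  induction n, hn using Nat.le_induction with
  | base => simp [Nat.centralBinom]
  | succ n _ ih =>
    have hrec := Nat.succ_mul_centralBinom_succ n
    have hsq : (n + 1) ^ 2 * (n + 1).centralBinom ^ 2 =
        (2 * (2 * n + 1)) ^ 2 * n.centralBinom ^ 2 := by
      rw [← mul_pow, ← mul_pow, hrec, mul_assoc]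
    have : (n + 1) ^ 2 * 16 ^ (n + 1) ≤ (n + 1) ^ 2 * (4 * (n + 1) * (n + 1).centralBinom ^ 2) :=
      calc (n + 1) ^ 2 * 16 ^ (n + 1) = 16 * (n + 1) ^ 2 * 16 ^ n := by ring
        _ ≤ 16 * (n + 1) ^ 2 * (4 * n * n.centralBinom ^ 2) := by gcongr
        _ = 16 * (n + 1) ^ 2 * (4 * n) * n.centralBinom ^ 2 := by ring
        _ ≤ 4 * (n + 1) * (2 * (2 * n + 1)) ^ 2 * n.centralBinom ^ 2 :=
          Nat.mul_le_mul_right _ (by nlinarith)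
        _ = 4 * (n + 1) * ((n + 1) ^ 2 * (n + 1).centralBinom ^ 2) := by rw [hsq]; ring
        _ = (n + 1) ^ 2 * (4 * (n + 1) * (n + 1).centralBinom ^ 2) := by ring
    exact Nat.le_of_mul_le_mul_left this (by positivity)

section GreenFunction

variable {κ : ℝ}

lemma summable_G (hκ : 0 < κ) (x : ℤ × ℤ) :
    Summable fun n : ℕ => (1 / (4 + κ)) ^ n * (W n x : ℝ) := by
  have hq : Summable fun n : ℕ => (4 / (4 + κ)) ^ n :=
    summable_geometric_of_lt_one (by positivity) ((div_lt_one (by linarith)).2 (by linarith))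
  refine hq.of_nonneg_of_le (fun n => by positivity) fun n => ?_
  calc (1 / (4 + κ)) ^ n * (W n x : ℝ) ≤ (1 / (4 + κ)) ^ n * 4 ^ n := by
        gcongr; exact_mod_cast W_le_four_pow n x
    _ = (4 / (4 + κ)) ^ n := by rw [← mul_pow, one_div_mul_eq_div]

lemma G_nonneg (hκ : 0 < κ) (x : ℤ × ℤ) : 0 ≤ G κ x :=
  tsum_nonneg fun n => by positivity

lemma G_le_chernoff (hκ : 0 < κ) (x : ℤ × ℤ) {t : ℝ} (ht : 0 ≤ t)
    (hρ : (2 * Real.cosh t) ^ 2 < 4 + κ) :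
    G κ x ≤ Real.exp (-(t * gnorm x)) / (1 - (2 * Real.cosh t) ^ 2 / (4 + κ)) := by
  set ρ := (2 * Real.cosh t) ^ 2 / (4 + κ)
  have hρ0 : 0 ≤ ρ := by positivity
  have hρ1 : ρ < 1 := (div_lt_one (by linarith)).2 hρ
  have hterm (n : ℕ) :
      (1 / (4 + κ)) ^ n * (W n x : ℝ) ≤ Real.exp (-(t * gnorm x)) * ρ ^ n := by
    calc (1 / (4 + κ)) ^ n * (W n x : ℝ)
        = (1 / (4 + κ)) ^ n * (W n x * Real.exp (t * gnorm x)) * Real.exp (-(t * gnorm x)) := by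
          rw [mul_assoc, mul_assoc, ← Real.exp_add, add_neg_cancel, Real.exp_zero, mul_one]
      _ ≤ (1 / (4 + κ)) ^ n * ((2 * Real.cosh t) ^ 2) ^ n * Real.exp (-(t * gnorm x)) := by
          gcongr; exact W_mul_exp_le n x ht
      _ = Real.exp (-(t * gnorm x)) * ρ ^ n := by
          simp only [ρ, div_pow]; ring
  calc G κ x ≤ ∑' n : ℕ, Real.exp (-(t * gnorm x)) * ρ ^ n :=
        (summable_G hκ x).tsum_le_tsum hterm
          ((summable_geometric_of_lt_one hρ0 hρ1).mul_left _)
    _ = Real.exp (-(t * gnorm x)) / (1 - ρ) := by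
        rw [tsum_mul_left, tsum_geometric_of_lt_one hρ0 hρ1, div_eq_mul_inv]

lemma exp_neg_sqrt_inv_div_two_le (hκ : 0 < κ) (hκ' : Real.exp 30 < κ⁻¹) :
    Real.exp (-(√κ⁻¹ / 2)) ≤ κ / 10 := by
  set y := √κ⁻¹ with hy_def
  have hκy : κ = (y ^ 2)⁻¹ := by rw [Real.sq_sqrt (inv_pos.2 hκ).le, inv_inv]
  have hy : 480 ≤ y := by
    have h15 := Real.pow_div_factorial_le_exp (x := 15) (by norm_num) 3
    have : Real.exp 15 ≤ y := by
      rw [hy_def, Real.le_sqrt (Real.exp_pos _).le (inv_pos.2 hκ).le, ← Real.exp_nat_mul]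
      norm_num; exact hκ'.le
    norm_num [Nat.factorial] at h15
    linarith
  have hexp : 10 * y ^ 2 ≤ Real.exp (y / 2) := by
    have := Real.pow_div_factorial_le_exp (x := y / 2) (by positivity) 3
    norm_num [Nat.factorial] at this
    nlinarith
  calc Real.exp (-(y / 2)) = (Real.exp (y / 2))⁻¹ := Real.exp_neg _
    _ ≤ (10 * y ^ 2)⁻¹ := inv_anti₀ (by positivity) hexp
    _ = κ / 10 := by rw [hκy]; field_simp

lemma G_le_one_of_far (hκ : 0 < κ) (hκ' : Real.exp 30 < κ⁻¹) {x : ℤ × ℤ}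
    (hx : 2 * κ⁻¹ ≤ gnorm x) : G κ x ≤ 1 := by
  set y := √κ⁻¹
  have hκy : κ = (y ^ 2)⁻¹ := by rw [Real.sq_sqrt (inv_pos.2 hκ).le, inv_inv]
  have hκ1 : κ ≤ 1 := by
    rw [← inv_inv κ]
    exact inv_le_one_of_one_le₀ ((Real.one_lt_exp_iff.2 (by norm_num)).trans hκ').le
  -- `t = √κ / 4` keeps `cosh² t ≈ 1 + κ / 16` below the killing factor `1 + κ / 4`,
  -- while still `t |x| ≥ √κ⁻¹ / 2`.
  set t := (4 * y)⁻¹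
  have hcosh : (2 * Real.cosh t) ^ 2 ≤ 4 + κ / 2 := by
    have hexp := Real.abs_exp_sub_one_sub_id_le (x := κ / 16)
      (by rw [abs_le]; constructor <;> linarith)
    have : t ^ 2 = κ / 16 := by rw [hκy]; simp only [t]; field_simp; ring
    calc (2 * Real.cosh t) ^ 2 ≤ (2 * Real.exp (t ^ 2 / 2)) ^ 2 := by
          gcongr; exact Real.cosh_le_exp_half_sq t
      _ = 4 * Real.exp (κ / 16) := by rw [mul_pow, ← Real.exp_nat_mul, this]; ring_nf
      _ ≤ 4 + κ / 2 := by rw [abs_le] at hexp; nlinarith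
  have hgap : κ / 10 ≤ 1 - (2 * Real.cosh t) ^ 2 / (4 + κ) := by
    rw [le_sub_comm, div_le_iff₀ (by linarith)]
    nlinarith
  have hdecay : Real.exp (-(t * gnorm x)) ≤ κ / 10 := by
    have : y / 2 ≤ t * gnorm x :=
      calc y / 2 = t * (2 * κ⁻¹) := by rw [hκy]; simp only [t]; field_simp; ring
        _ ≤ t * gnorm x := by gcongr
    exact (Real.exp_le_exp.2 (by linarith)).trans (exp_neg_sqrt_inv_div_two_le hκ hκ')
  calc G κ x ≤ Real.exp (-(t * gnorm x)) / (1 - (2 * Real.cosh t) ^ 2 / (4 + κ)) :=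
        G_le_chernoff hκ x (by positivity) (by linarith)
    _ ≤ (κ / 10) / (κ / 10) := div_le_div₀ (by positivity) hdecay (by positivity) hgap
    _ = 1 := div_self (by positivity)

lemma harmonic_le_G_zero (hκ : 0 < κ) (N : ℕ) :
    (1 - N * κ / 2) * harmonic N / 4 ≤ G κ (0, 0) := by
  have hterm (j : ℕ) (hj : j ∈ range N) :
      (1 - N * κ / 2) / (4 * (j + 1)) ≤
        (1 / (4 + κ)) ^ (2 * (j + 1)) * (W (2 * (j + 1)) (0, 0) : ℝ) := by
    have hjN : (j : ℝ) + 1 ≤ N := by exact_mod_cast mem_range.1 hj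
    have hdamp : 1 - N * κ / 2 ≤ (4 / (4 + κ)) ^ (2 * (j + 1)) := by
      have hb := one_add_mul_le_pow (a := -(κ / (4 + κ))) (by
        have : κ / (4 + κ) ≤ 1 := (div_le_one (by linarith)).2 (by linarith)
        linarith) (2 * (j + 1))
      have h4 : 1 + -(κ / (4 + κ)) = 4 / (4 + κ) := by field_simp; ring
      have h5 : κ / (4 + κ) ≤ κ / 4 :=
        div_le_div_of_nonneg_left hκ.le (by norm_num) (by linarith)
      rw [h4] at hb
      push_cast at hb
      nlinarith
    have hcb : (16 : ℝ) ^ (j + 1) / (4 * (j + 1)) ≤ (W (2 * (j + 1)) (0, 0) : ℝ) := by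
      have h := sixteen_pow_le_mul_centralBinom_sq j.succ_pos
      rw [W_two_mul_zero, div_le_iff₀ (by positivity)]
      calc (16 : ℝ) ^ (j + 1) ≤ 4 * (j + 1 : ℕ) * ((j + 1).centralBinom ^ 2 : ℕ) := by
            exact_mod_cast h
        _ = _ := by push_cast; ring
    have h16 : (4 / (4 + κ)) ^ (2 * (j + 1)) = (1 / (4 + κ)) ^ (2 * (j + 1)) * 16 ^ (j + 1) := by
      rw [pow_mul, pow_mul, ← mul_pow]; congr 1; ring
    calc (1 - N * κ / 2) / (4 * (j + 1))
        ≤ (4 / (4 + κ)) ^ (2 * (j + 1)) / (4 * (j + 1)) := by gcongr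
      _ = (1 / (4 + κ)) ^ (2 * (j + 1)) * ((16 : ℝ) ^ (j + 1) / (4 * (j + 1))) := by
        rw [h16, mul_div_assoc]
      _ ≤ _ := by gcongr
  calc (1 - N * κ / 2) * harmonic N / 4
      = ∑ j ∈ range N, (1 - N * κ / 2) / (4 * (j + 1)) := by
        simp only [harmonic, Rat.cast_sum, mul_sum, sum_div]
        refine sum_congr rfl fun j _ => ?_
        push_cast; field_simp
    _ ≤ ∑ j ∈ range N, (1 / (4 + κ)) ^ (2 * (j + 1)) * (W (2 * (j + 1)) (0, 0) : ℝ) :=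
        sum_le_sum hterm
    _ = ∑ n ∈ (range N).image (fun j => 2 * (j + 1)), (1 / (4 + κ)) ^ n * (W n (0, 0) : ℝ) := by
        rw [sum_image fun a _ b _ h => by omega]
    _ ≤ G κ (0, 0) := (summable_G hκ _).sum_le_tsum _ fun n _ => by positivity

lemma log_inv_div_two_pi_add_one_le_G_zero (hκ : 0 < κ) (hκ' : Real.exp 30 < κ⁻¹) :
    Real.log κ⁻¹ / (2 * π) + 1 ≤ G κ (0, 0) := by
  set L := Real.log κ⁻¹
  have hL : 30 < L := (Real.lt_log_iff_exp_lt (by positivity)).2 hκ'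
  set N := ⌊κ⁻¹ / 20⌋₊
  have hNκ : N * κ ≤ 1 / 20 := by
    have := Nat.floor_le (a := κ⁻¹ / 20) (by positivity)
    calc N * κ ≤ κ⁻¹ / 20 * κ := by gcongr
      _ = 1 / 20 := by field_simp
  have hlogN : L - 3 ≤ Real.log (N + 1) := by
    have h20 : Real.log 20 < 3 := by
      rw [Real.log_lt_iff_lt_exp (by norm_num), show (3 : ℝ) = (3 : ℕ) * 1 by norm_num,
        Real.exp_nat_mul]
      have := Real.exp_one_gt_d9
      calc (20 : ℝ) < 2.7182818283 ^ 3 := by norm_num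
        _ < Real.exp 1 ^ 3 := by gcongr
    have : Real.log (κ⁻¹ / 20) ≤ Real.log (N + 1) :=
      Real.log_le_log (by positivity) (Nat.lt_floor_add_one _).le
    rw [Real.log_div (by positivity) (by norm_num)] at this
    linarith
  have hH : L - 3 ≤ harmonic N := by
    have := log_add_one_le_harmonic N
    push_cast at this
    linarith
  have hπ : 3.14 < π := Real.pi_gt_d2
  calc L / (2 * π) + 1 ≤ 39 / 40 * (L - 3) / 4 := by
        rw [div_add_one (by positivity), div_le_div_iff₀ (by positivity) (by norm_num)]
        nlinarith
    _ ≤ (1 - N * κ / 2) * harmonic N / 4 := by gcongr <;> linarith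
    _ ≤ G κ (0, 0) := harmonic_le_G_zero hκ N

end GreenFunction

theorem stmt15_general (κ : ℝ) (hκ : 0 < κ) (hκ' : Real.exp 30 < κ⁻¹)
    (ε : ℝ) (hε' : ε < 1) (m : ℝ) (hm : 2 ≤ m)
    (x : ℤ × ℤ) (hx : 2 * κ⁻¹ ≤ (gnorm x : ℝ)) :
    ((G κ (0, 0)) ^ 2 - (G κ x) ^ 2)
        ^ (-(1 - ε) * (Real.log m / Real.log (G κ (0, 0))))
      ≤ m ^ (-(1 - ε)) *
        (Real.log κ⁻¹ / (2 * π))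
          ^ (-(1 - ε) * (Real.log m / Real.log (G κ (0, 0)))) := by
  set Go := G κ (0, 0)
  set A := Real.log κ⁻¹ / (2 * π)
  set c := -(1 - ε) * (Real.log m / Real.log Go)
  have hGo : A + 1 ≤ Go := log_inv_div_two_pi_add_one_le_G_zero hκ hκ'
  have hA : 0 < A :=
    div_pos (Real.log_pos ((Real.one_lt_exp_iff.2 (by norm_num)).trans hκ')) (by positivity)
  have hGx : 0 ≤ G κ x ∧ G κ x ≤ 1 := ⟨G_nonneg hκ x, G_le_one_of_far hκ hκ' hx⟩
  have hlogGo : 0 < Real.log Go := Real.log_pos (by linarith)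
  have hc : c ≤ 0 :=
    mul_nonpos_of_nonpos_of_nonneg (by linarith)
      (div_nonneg (Real.log_nonneg (by linarith)) hlogGo.le)
  have hm_rpow : m ^ (-(1 - ε)) = Go ^ c := by
    rw [Real.rpow_def_of_pos (by linarith), Real.rpow_def_of_pos (by linarith)]
    simp only [c]
    field_simp
  have hkey : Go * A ≤ Go ^ 2 - G κ x ^ 2 := by nlinarith
  rw [hm_rpow, ← Real.mul_rpow (by linarith) hA.le]
  exact Real.rpow_le_rpow_of_nonpos (mul_pos (by linarith) hA) hkey hc

/-- Proposition 4.1, eq. (4.5): for `κ⁻¹ > e^{30}`, `0 < ε < 1`, `m ≥ 2`,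
`u* = log m / log G^{o,o}` and every `|x| ≥ 2κ⁻¹`,
`((G^{o,o})² − (G^{o,x})²)^{−(1−ε)u*} ≤ m^{−(1−ε)} ((log κ⁻¹)/(2π))^{−(1−ε)u*}`. -/
theorem stmt15 (κ : ℝ) (hκ : 0 < κ) (hκ' : Real.exp 30 < κ⁻¹)
    (ε : ℝ) (hε : 0 < ε) (hε' : ε < 1) (m : ℝ) (hm : 2 ≤ m)
    (x : ℤ × ℤ) (hx : 2 * κ⁻¹ ≤ (gnorm x : ℝ)) :
    ((G κ (0, 0)) ^ 2 - (G κ x) ^ 2)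
        ^ (-(1 - ε) * (Real.log m / Real.log (G κ (0, 0))))
      ≤ m ^ (-(1 - ε)) *
        (Real.log κ⁻¹ / (2 * π))
          ^ (-(1 - ε) * (Real.log m / Real.log (G κ (0, 0)))) :=
  stmt15_general κ hκ hκ' ε hε' m hm x hx
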